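/- arXiv:2501.09876 — 3 statements merged into one kernel-verified Lean document; each statement's English description precedes it below -/
import Mathlib

section
/- Fix β ≥ 1 with 1 + diam(M)² < β². If T : M → ℝ^d is β-bi-Lipschitz (i.e., (1/β)‖x−x'‖ ≤ ‖T(x)−T(x')‖ ≤ β‖x−x'‖ for all x, x' ∈ M), then for any probability measure μ on M, 0 ≤ C_GME(T) ≤ 4 (log β)², where C_GME(T) = ∫∫ (log((1+‖T(x)−T(x')‖²)/(1+‖x−x'‖²)))² dμ dμ. -/
open MeasureTheory ENNReal

/-- If `T` is `β`-bi-Lipschitz on the compact set `M` with `1 + diam(M)² < β²`,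
then the GME cost of `T` (for any probability measure supported on `M`)
lies between `0` and `4 (log β)²`. -/
theorem gme_cost_bounds_of_biLipschitz
    {D d : ℕ} (β : ℝ) (hβ : 1 ≤ β)
    (M : Set (EuclideanSpace ℝ (Fin D))) (hM : IsCompact M)
    (hdiam : 1 + Metric.diam M ^ 2 < β ^ 2)
    (T : EuclideanSpace ℝ (Fin D) → EuclideanSpace ℝ (Fin d))
    (hbiLip : ∀ x ∈ M, ∀ x' ∈ M,
      (1 / β) * ‖x - x'‖ ≤ ‖T x - T x'‖ ∧ ‖T x - T x'‖ ≤ β * ‖x - x'‖)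
    (μ : Measure (EuclideanSpace ℝ (Fin D))) [IsProbabilityMeasure μ]
    (hsupp : μ Mᶜ = 0) :
    0 ≤ ∫⁻ p, ENNReal.ofReal
        ((Real.log ((1 + ‖T p.1 - T p.2‖ ^ 2) / (1 + ‖p.1 - p.2‖ ^ 2))) ^ 2)
        ∂(μ.prod μ) ∧
    ∫⁻ p, ENNReal.ofReal
        ((Real.log ((1 + ‖T p.1 - T p.2‖ ^ 2) / (1 + ‖p.1 - p.2‖ ^ 2))) ^ 2)
        ∂(μ.prod μ) ≤ ENNReal.ofReal (4 * (Real.log β) ^ 2) := by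
  have hβ0 : (0:ℝ) < β := lt_of_lt_of_le one_pos hβ
  refine ⟨zero_le, ?_⟩
  -- a.e. p lies in M ×ˢ M
  have hae : ∀ᵐ p ∂(μ.prod μ), p ∈ M ×ˢ M := by
    rw [MeasureTheory.ae_iff]
    have h0 : μ.prod μ ((Mᶜ ×ˢ Set.univ) ∪ (Set.univ ×ˢ Mᶜ)) = 0 := by
      refine measure_union_null ?_ ?_ <;> simp [Measure.prod_prod, hsupp]
    refine measure_mono_null (fun p hp => ?_) h0
    simp only [Set.mem_prod, Set.mem_union, Set.mem_compl_iff, Set.mem_univ, and_true,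
      true_and, Set.mem_setOf_eq] at hp ⊢
    tauto
  calc ∫⁻ p, ENNReal.ofReal
        ((Real.log ((1 + ‖T p.1 - T p.2‖ ^ 2) / (1 + ‖p.1 - p.2‖ ^ 2))) ^ 2)
        ∂(μ.prod μ)
      ≤ ∫⁻ _, ENNReal.ofReal (4 * (Real.log β) ^ 2) ∂(μ.prod μ) := by
        refine lintegral_mono_ae (hae.mono fun p hp => ?_)
        obtain ⟨hp1, hp2⟩ := hp
        obtain ⟨hlow, hhigh⟩ := hbiLip p.1 hp1 p.2 hp2
        set a := ‖p.1 - p.2‖ with ha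
        set b := ‖T p.1 - T p.2‖ with hb
        have ha0 : 0 ≤ a := norm_nonneg _
        have hb0 : 0 ≤ b := norm_nonneg _
        have h1 : b ^ 2 ≤ β ^ 2 * a ^ 2 := by
          have := mul_self_le_mul_self hb0 hhigh
          nlinarith
        have h2 : a ^ 2 ≤ β ^ 2 * b ^ 2 := by
          have hβinv : β * (1 / β) = 1 := by field_simp
          have hab : a ≤ β * b := by
            nlinarith [mul_le_mul_of_nonneg_left hlow hβ0.le]
          nlinarith [mul_self_le_mul_self ha0 hab]
        have hden : (0:ℝ) < 1 + a ^ 2 := by positivity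
        have hnum : (0:ℝ) < 1 + b ^ 2 := by positivity
        have hβ2 : (1:ℝ) ≤ β ^ 2 := by nlinarith
        set r := (1 + b ^ 2) / (1 + a ^ 2) with hr
        have hr0 : 0 < r := div_pos hnum hden
        have hru : r ≤ β ^ 2 := by
          rw [hr, div_le_iff₀ hden]; nlinarith
        have hrl : (β ^ 2)⁻¹ ≤ r := by
          rw [hr, le_div_iff₀ hden, inv_mul_le_iff₀ (by positivity)]
          nlinarith
        have hlogu : Real.log r ≤ 2 * Real.log β := by
          calc Real.log r ≤ Real.log (β ^ 2) := Real.log_le_log hr0 hru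
            _ = 2 * Real.log β := by rw [Real.log_pow]; push_cast; ring
        have hlogl : -(2 * Real.log β) ≤ Real.log r := by
          calc -(2 * Real.log β) = Real.log ((β ^ 2)⁻¹) := by
                rw [Real.log_inv, Real.log_pow]; push_cast; ring
            _ ≤ Real.log r := Real.log_le_log (by positivity) hrl
        refine ENNReal.ofReal_le_ofReal ?_
        have := sq_le_sq' hlogl hlogu
        nlinarith [this]
    _ = ENNReal.ofReal (4 * (Real.log β) ^ 2) := by
        simp [lintegral_const]
end

section
/- Let G be a symmetric positive semidefinite m×m matrix with eigenvalues λ₁,…,λ_m, and let A := ∫_{S^{m−1}} (vᵀ G v − 1)² dv with dv the normalized uniform measure on the unit sphere in ℝ^m. Then A = (1/(m(m+2)))(2 Σᵢ(λᵢ−1)² + (Σᵢ(λᵢ−1))²) ≥ (2/(m(m+2))) Σᵢ(λᵢ−1)². In particular, A < η implies Σᵢ(λᵢ−1)² < η m(m+2)/2. -/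
open MeasureTheory Matrix

open Finset

set_option linter.unusedSectionVars false
set_option maxHeartbeats 1000000

section infra
variable {m : ℕ}

noncomputable def SAD.matIso (U : Matrix (Fin m) (Fin m) ℝ)
    (h1 : Uᵀ * U = 1) (h2 : U * Uᵀ = 1) :
    EuclideanSpace ℝ (Fin m) ≃ₗᵢ[ℝ] EuclideanSpace ℝ (Fin m) :=
  LinearEquiv.isometryOfInner
    { toFun := fun v => WithLp.toLp 2 (U.mulVec v)
      invFun := fun v => WithLp.toLp 2 (Uᵀ.mulVec v)
      map_add' := fun x y => by ext k; simp [Matrix.mulVec_add]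
      map_smul' := fun c x => by ext k; simp [Matrix.mulVec_smul]
      left_inv := fun v => by
        show WithLp.toLp 2 (Uᵀ.mulVec (U.mulVec v)) = v
        simp [Matrix.mulVec_mulVec, h1]
      right_inv := fun v => by
        show WithLp.toLp 2 (U.mulVec (Uᵀ.mulVec v)) = v
        simp [Matrix.mulVec_mulVec, h2] }
    (fun x y => by
      simp only [PiLp.inner_apply, RCLike.inner_apply, conj_trivial, LinearEquiv.coe_mk]
      show (U.mulVec y) ⬝ᵥ (U.mulVec x) = y ⬝ᵥ x
      rw [Matrix.dotProduct_mulVec, Matrix.vecMul_mulVec, h1, Matrix.vecMul_one])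

lemma SAD.matIso_apply (U : Matrix (Fin m) (Fin m) ℝ)
    (h1 : Uᵀ * U = 1) (h2 : U * Uᵀ = 1) (v : EuclideanSpace ℝ (Fin m)) (k : Fin m) :
    SAD.matIso U h1 h2 v k = U.mulVec v k := rfl

noncomputable def SAD.flipIso (j : Fin m) :
    EuclideanSpace ℝ (Fin m) ≃ₗᵢ[ℝ] EuclideanSpace ℝ (Fin m) :=
  LinearIsometryEquiv.piLpCongrRight 2
    (fun k => if k = j then LinearIsometryEquiv.neg ℝ else LinearIsometryEquiv.refl ℝ ℝ)

lemma SAD.flipIso_apply (j k : Fin m) (v : EuclideanSpace ℝ (Fin m)) :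
    SAD.flipIso j v k = if k = j then -(v k) else v k := by
  simp [SAD.flipIso, LinearIsometryEquiv.piLpCongrRight_apply]
  split <;> simp

noncomputable def SAD.swapIso (i j : Fin m) :
    EuclideanSpace ℝ (Fin m) ≃ₗᵢ[ℝ] EuclideanSpace ℝ (Fin m) :=
  LinearIsometryEquiv.piLpCongrLeft 2 ℝ ℝ (Equiv.swap i j)

lemma SAD.swapIso_apply (i j k : Fin m) (v : EuclideanSpace ℝ (Fin m)) :
    SAD.swapIso i j v k = v (Equiv.swap i j k) := by
  simp [SAD.swapIso, LinearIsometryEquiv.piLpCongrLeft_apply, Equiv.piCongrLeft'_apply,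
    Equiv.symm_swap]

noncomputable def SAD.rotMap (i j : Fin m) (v : Fin m → ℝ) : Fin m → ℝ :=
  fun k => if k = i then (v i + v j) / Real.sqrt 2
    else if k = j then (v i - v j) / Real.sqrt 2 else v k

lemma SAD.rotMap_invol (i j : Fin m) (hij : i ≠ j) :
    Function.Involutive (SAD.rotMap i j) := by
  intro v
  have h2 : Real.sqrt 2 * Real.sqrt 2 = 2 := Real.mul_self_sqrt (by norm_num)
  funext k
  by_cases hk1 : k = i
  · subst hk1
    simp only [SAD.rotMap, if_pos rfl, if_true, if_neg hij, if_neg (Ne.symm hij)]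
    rw [← add_div, div_div, h2]
    ring
  · by_cases hk2 : k = j
    · subst hk2
      simp only [SAD.rotMap, if_pos rfl, if_true, if_neg hij, if_neg (Ne.symm hij), if_neg hk1]
      rw [← sub_div, div_div, h2]
      ring
    · simp only [SAD.rotMap, if_neg hk1, if_neg hk2]

lemma SAD.rotMap_inner (i j : Fin m) (hij : i ≠ j) (x y : Fin m → ℝ) :
    ∑ k, SAD.rotMap i j x k * SAD.rotMap i j y k = ∑ k, x k * y k := by
  classical
  have h2 : Real.sqrt 2 * Real.sqrt 2 = 2 := Real.mul_self_sqrt (by norm_num)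
  have hji : j ∈ Finset.univ.erase i := Finset.mem_erase.mpr ⟨Ne.symm hij, Finset.mem_univ j⟩
  rw [← Finset.add_sum_erase _ _ (Finset.mem_univ i), ← Finset.add_sum_erase _ _ hji]
  conv_rhs => rw [← Finset.add_sum_erase _ (fun k => x k * y k) (Finset.mem_univ i),
    ← Finset.add_sum_erase _ (fun k => x k * y k) hji]
  have htail : ∀ k ∈ (Finset.univ.erase i).erase j,
      SAD.rotMap i j x k * SAD.rotMap i j y k = x k * y k := by
    intro k hk
    have hkj : k ≠ j := (Finset.mem_erase.1 hk).1
    have hki : k ≠ i := (Finset.mem_erase.1 (Finset.mem_erase.1 hk).2).1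
    simp [SAD.rotMap, hki, hkj]
  rw [Finset.sum_congr rfl htail]
  have hxi : ∀ z : Fin m → ℝ, SAD.rotMap i j z i = (z i + z j) / Real.sqrt 2 := by
    intro z; simp [SAD.rotMap]
  have hxj : ∀ z : Fin m → ℝ, SAD.rotMap i j z j = (z i - z j) / Real.sqrt 2 := by
    intro z; simp [SAD.rotMap, Ne.symm hij]
  rw [hxi, hxi, hxj, hxj]
  have key : (x i + x j) / Real.sqrt 2 * ((y i + y j) / Real.sqrt 2) +
      (x i - x j) / Real.sqrt 2 * ((y i - y j) / Real.sqrt 2) = x i * y i + x j * y j := by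
    rw [div_mul_div_comm, div_mul_div_comm, h2, ← add_div]
    ring
  rw [← add_assoc, key, add_assoc]

noncomputable def SAD.rotIso (i j : Fin m) (hij : i ≠ j) :
    EuclideanSpace ℝ (Fin m) ≃ₗᵢ[ℝ] EuclideanSpace ℝ (Fin m) :=
  LinearEquiv.isometryOfInner
    { toFun := fun v => WithLp.toLp 2 (SAD.rotMap i j v)
      invFun := fun v => WithLp.toLp 2 (SAD.rotMap i j v)
      map_add' := fun x y => by
        ext k
        simp only [SAD.rotMap, PiLp.add_apply]
        split <;> try split
        all_goals ring
      map_smul' := fun c x => by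
        ext k
        simp only [SAD.rotMap, PiLp.smul_apply, smul_eq_mul, RingHom.id_apply]
        split <;> try split
        all_goals ring
      left_inv := fun v => by simp [SAD.rotMap_invol i j hij _]
      right_inv := fun v => by simp [SAD.rotMap_invol i j hij _] }
    (fun x y => by
      simp only [PiLp.inner_apply, RCLike.inner_apply, conj_trivial, LinearEquiv.coe_mk]
      exact SAD.rotMap_inner i j hij y x)

lemma SAD.rotIso_apply (i j : Fin m) (hij : i ≠ j) (v : EuclideanSpace ℝ (Fin m)) (k : Fin m) :
    SAD.rotIso i j hij v k = SAD.rotMap i j v k := rfl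

end infra

section basic
variable {m : ℕ} (σ : Measure (EuclideanSpace ℝ (Fin m))) [IsProbabilityMeasure σ]

lemma SAD.ae_sphere (hsupp : σ (Metric.sphere (0 : EuclideanSpace ℝ (Fin m)) 1)ᶜ = 0) :
    ∀ᵐ v ∂σ, v ∈ Metric.sphere (0 : EuclideanSpace ℝ (Fin m)) 1 :=
  mem_ae_iff.mpr hsupp

lemma SAD.ae_sum_sq (hsupp : σ (Metric.sphere (0 : EuclideanSpace ℝ (Fin m)) 1)ᶜ = 0) :
    ∀ᵐ v ∂σ, ∑ i, (v i) ^ 2 = 1 := by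
  filter_upwards [SAD.ae_sphere σ hsupp] with v hv
  have hn : ‖v‖ = 1 := by simpa using hv
  have h : ∑ i, (v i) ^ 2 = @inner ℝ _ _ v v := by
    simp only [real_inner_self_eq_norm_sq, EuclideanSpace.norm_eq, Real.norm_eq_abs, sq_abs]
    rw [Real.sq_sqrt (by positivity)]
  rw [h, real_inner_self_eq_norm_sq, hn, one_pow]

lemma SAD.integ (hsupp : σ (Metric.sphere (0 : EuclideanSpace ℝ (Fin m)) 1)ᶜ = 0)
    {f : EuclideanSpace ℝ (Fin m) → ℝ} (hf : Continuous f) : Integrable f σ := by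
  obtain ⟨C, hC⟩ := (isCompact_sphere (0 : EuclideanSpace ℝ (Fin m)) 1).exists_bound_of_continuousOn
    hf.continuousOn
  refine (integrable_const C).mono' hf.aestronglyMeasurable ?_
  filter_upwards [SAD.ae_sphere σ hsupp] with v hv
  exact hC v hv

lemma SAD.key (hinv : ∀ O : EuclideanSpace ℝ (Fin m) ≃ₗᵢ[ℝ] EuclideanSpace ℝ (Fin m), σ.map O = σ)
    (T : EuclideanSpace ℝ (Fin m) ≃ₗᵢ[ℝ] EuclideanSpace ℝ (Fin m))
    {f : EuclideanSpace ℝ (Fin m) → ℝ} (hf : Continuous f) :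
    ∫ v, f (T v) ∂σ = ∫ v, f v ∂σ := by
  conv_rhs => rw [← hinv T]
  rw [integral_map T.continuous.measurable.aemeasurable]
  exact hf.aestronglyMeasurable.mono_measure (le_of_eq (hinv T)) |>.mono_measure le_rfl

end basic

section moments
variable {m : ℕ} (σ : Measure (EuclideanSpace ℝ (Fin m))) [IsProbabilityMeasure σ]
  (hsupp : σ (Metric.sphere (0 : EuclideanSpace ℝ (Fin m)) 1)ᶜ = 0)
  (hinv : ∀ O : EuclideanSpace ℝ (Fin m) ≃ₗᵢ[ℝ] EuclideanSpace ℝ (Fin m), σ.map O = σ)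

lemma SAD.cont_mono (i j : Fin m) (a b : ℕ) :
    Continuous fun v : EuclideanSpace ℝ (Fin m) => (v i) ^ a * (v j) ^ b :=
  ((PiLp.continuous_apply 2 _ i).pow a).mul ((PiLp.continuous_apply 2 _ j).pow b)

include hsupp hinv

lemma SAD.int_mono (i j : Fin m) (a b : ℕ) :
    Integrable (fun v : EuclideanSpace ℝ (Fin m) => (v i) ^ a * (v j) ^ b) σ :=
  SAD.integ σ hsupp (SAD.cont_mono i j a b)

lemma SAD.M_odd (i j : Fin m) (hij : i ≠ j) (a b : ℕ) (hb : Odd b) :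
    ∫ v, (v i) ^ a * (v j) ^ b ∂σ = 0 := by
  have h := SAD.key σ hinv (SAD.flipIso j) (SAD.cont_mono i j a b)
  simp only [SAD.flipIso_apply, if_neg hij, if_pos rfl, if_true, hb.neg_pow, mul_neg] at h
  rw [integral_neg] at h
  linarith

lemma SAD.M_swap_pow (i j : Fin m) (p : ℕ) :
    ∫ v, (v i) ^ p ∂σ = ∫ v, (v j) ^ p ∂σ := by
  have h := SAD.key σ hinv (SAD.swapIso i j) (f := fun v => (v i) ^ p) ((PiLp.continuous_apply 2 _ i).pow p)
  simp only [SAD.swapIso_apply] at h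
  rw [Equiv.swap_apply_left] at h
  exact h.symm

lemma SAD.M_I2 (i : Fin m) : ∫ v, (v i) ^ 2 ∂σ = 1 / m := by
  have hm0 : (0 : ℝ) < m := by exact_mod_cast i.pos
  have hsum : ∑ j, ∫ v, (v j) ^ 2 ∂σ = 1 := by
    rw [← integral_finset_sum _ (fun j _ => SAD.integ σ hsupp (f := fun v => (v j) ^ 2) ((PiLp.continuous_apply 2 _ j).pow 2))]
    calc ∫ v, ∑ j, (v j) ^ 2 ∂σ = ∫ _v, (1 : ℝ) ∂σ := integral_congr_ae (SAD.ae_sum_sq σ hsupp)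
      _ = 1 := by simp
  have hconst : ∑ j, ∫ v, (v j) ^ 2 ∂σ = ∑ _j : Fin m, ∫ v, (v i) ^ 2 ∂σ :=
    Finset.sum_congr rfl (fun j _ => SAD.M_swap_pow σ hsupp hinv j i 2)
  rw [hconst, Finset.sum_const, Finset.card_univ, Fintype.card_fin, nsmul_eq_mul] at hsum
  rw [eq_div_iff hm0.ne']
  linarith

lemma SAD.M_rowsum (i : Fin m) :
    ∑ j, ∫ v, (v i) ^ 2 * (v j) ^ 2 ∂σ = 1 / m := by
  calc ∑ j, ∫ v, (v i) ^ 2 * (v j) ^ 2 ∂σ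
      = ∫ v, ∑ j, (v i) ^ 2 * (v j) ^ 2 ∂σ :=
        (integral_finset_sum _ (fun j _ => SAD.int_mono σ hsupp hinv i j 2 2)).symm
    _ = ∫ v, (v i) ^ 2 ∂σ := by
        refine integral_congr_ae ?_
        filter_upwards [SAD.ae_sum_sq σ hsupp] with v hv
        rw [← Finset.mul_sum, hv, mul_one]
    _ = 1 / m := SAD.M_I2 σ hsupp hinv i

lemma SAD.M_offdiag_rel (i j : Fin m) (hij : i ≠ j) :
    ∫ v, (v i) ^ 2 * (v j) ^ 2 ∂σ = (∫ v, (v i) ^ 4 ∂σ) / 3 := by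
  have h := SAD.key σ hinv (SAD.rotIso i j hij) (f := fun v => (v i) ^ 4) ((PiLp.continuous_apply 2 _ i).pow 4)
  have hri : ∀ v : EuclideanSpace ℝ (Fin m),
      (SAD.rotIso i j hij v) i = (v i + v j) / Real.sqrt 2 := by
    intro v; rw [SAD.rotIso_apply]; simp [SAD.rotMap]
  simp only [hri] at h
  have hexp : ∀ a b : ℝ, ((a + b) / Real.sqrt 2) ^ 4 =
      (1/4) * a ^ 4 + a ^ 3 * b ^ 1 + (3/2) * (a ^ 2 * b ^ 2) + a ^ 1 * b ^ 3
        + (1/4) * b ^ 4 := by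
    intro a b
    have h2 : Real.sqrt 2 ^ 2 = 2 := Real.sq_sqrt (by norm_num)
    have h4 : Real.sqrt 2 ^ 4 = 4 := by
      rw [show (4 : ℕ) = 2 * 2 from rfl, pow_mul, h2]; norm_num
    rw [div_pow, h4]; ring
  simp only [hexp] at h
  have i1 : Integrable (fun v : EuclideanSpace ℝ (Fin m) => (1/4) * (v i) ^ 4) σ :=
    (SAD.integ σ hsupp ((PiLp.continuous_apply 2 _ i).pow 4)).const_mul _
  have i2 : Integrable (fun v : EuclideanSpace ℝ (Fin m) => (v i) ^ 3 * (v j) ^ 1) σ :=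
    SAD.int_mono σ hsupp hinv i j 3 1
  have i3 : Integrable (fun v : EuclideanSpace ℝ (Fin m) => (3/2) * ((v i) ^ 2 * (v j) ^ 2)) σ :=
    (SAD.int_mono σ hsupp hinv i j 2 2).const_mul _
  have i4 : Integrable (fun v : EuclideanSpace ℝ (Fin m) => (v i) ^ 1 * (v j) ^ 3) σ :=
    SAD.int_mono σ hsupp hinv i j 1 3
  have i5 : Integrable (fun v : EuclideanSpace ℝ (Fin m) => (1/4) * (v j) ^ 4) σ :=
    (SAD.integ σ hsupp ((PiLp.continuous_apply 2 _ j).pow 4)).const_mul _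
  have i12 : Integrable (fun v : EuclideanSpace ℝ (Fin m) =>
      (1/4) * (v i) ^ 4 + (v i) ^ 3 * (v j) ^ 1) σ := i1.add i2
  have i123 : Integrable (fun v : EuclideanSpace ℝ (Fin m) =>
      (1/4) * (v i) ^ 4 + (v i) ^ 3 * (v j) ^ 1 + (3/2) * ((v i) ^ 2 * (v j) ^ 2)) σ := i12.add i3
  have i1234 : Integrable (fun v : EuclideanSpace ℝ (Fin m) =>
      (1/4) * (v i) ^ 4 + (v i) ^ 3 * (v j) ^ 1 + (3/2) * ((v i) ^ 2 * (v j) ^ 2)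
        + (v i) ^ 1 * (v j) ^ 3) σ := i123.add i4
  rw [integral_add i1234 i5, integral_add i123 i4, integral_add i12 i3, integral_add i1 i2,
    integral_const_mul, integral_const_mul, integral_const_mul,
    SAD.M_odd σ hsupp hinv i j hij 3 1 (by decide),
    SAD.M_odd σ hsupp hinv i j hij 1 3 (by decide),
    SAD.M_swap_pow σ hsupp hinv j i 4] at h
  linarith

lemma SAD.M_Q (i : Fin m) : ∫ v, (v i) ^ 4 ∂σ = 3 / ((m : ℝ) * (m + 2)) := by
  have hm0 : (0 : ℝ) < m := by exact_mod_cast i.pos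
  have hm1 : (1 : ℝ) ≤ m := by exact_mod_cast i.pos
  have hrow := SAD.M_rowsum σ hsupp hinv i
  rw [← Finset.add_sum_erase _ _ (Finset.mem_univ i)] at hrow
  have hoff : ∑ j ∈ Finset.univ.erase i, ∫ v, (v i) ^ 2 * (v j) ^ 2 ∂σ
      = ∑ _j ∈ Finset.univ.erase i, (∫ v, (v i) ^ 4 ∂σ) / 3 :=
    Finset.sum_congr rfl (fun j hj =>
      SAD.M_offdiag_rel σ hsupp hinv i j (Ne.symm (Finset.mem_erase.1 hj).1))
  rw [hoff, Finset.sum_const, Finset.card_erase_of_mem (Finset.mem_univ i),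
    Finset.card_univ, Fintype.card_fin, nsmul_eq_mul] at hrow
  have hii : ∫ v, (v i) ^ 2 * (v i) ^ 2 ∂σ = ∫ v, (v i) ^ 4 ∂σ := by
    congr 1; funext v; ring
  rw [hii] at hrow
  have hcast : ((m - 1 : ℕ) : ℝ) = (m : ℝ) - 1 := by
    rw [Nat.cast_sub i.pos]; simp
  rw [hcast] at hrow
  rw [eq_div_iff (by positivity)]
  set Q := ∫ v, (v i) ^ 4 ∂σ with hQ
  have h4 : (Q + ((m:ℝ) - 1) * (Q / 3)) * (3 * m) = (1 / m) * (3 * m) := by rw [hrow]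
  have h5 : (1 / (m:ℝ)) * (3 * m) = 3 := by field_simp
  rw [h5] at h4
  linear_combination h4

lemma SAD.M_offdiag (i j : Fin m) (hij : i ≠ j) :
    ∫ v, (v i) ^ 2 * (v j) ^ 2 ∂σ = 1 / ((m : ℝ) * (m + 2)) := by
  rw [SAD.M_offdiag_rel σ hsupp hinv i j hij, SAD.M_Q σ hsupp hinv i]
  ring

end moments

/-- Sphere average of the squared metric distortion: for a symmetric PSD
matrix `G` with eigenvalues `λᵢ` and the rotation-invariant probability
measure `σ` on the unit sphere `S^{m−1}`,
`A := ∫ (vᵀGv − 1)² dσ = (1/(m(m+2)))(2 Σ(λᵢ−1)² + (Σ(λᵢ−1))²)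
   ≥ (2/(m(m+2))) Σ(λᵢ−1)²`,
and in particular `A < η` implies `Σ(λᵢ−1)² < η m (m+2)/2`. -/
theorem sphere_average_distortion
    {m : ℕ} (hm : 1 ≤ m)
    (σ : Measure (EuclideanSpace ℝ (Fin m))) [IsProbabilityMeasure σ]
    (hsupp : σ (Metric.sphere (0 : EuclideanSpace ℝ (Fin m)) 1)ᶜ = 0)
    (hinv : ∀ O : EuclideanSpace ℝ (Fin m) ≃ₗᵢ[ℝ] EuclideanSpace ℝ (Fin m),
      σ.map O = σ)
    (G : Matrix (Fin m) (Fin m) ℝ) (hG : G.PosSemidef) (η : ℝ) :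
    (∫ v, ((fun k => v k) ⬝ᵥ G.mulVec (fun k => v k) - 1) ^ 2 ∂σ
        = (1 / ((m : ℝ) * (m + 2))) *
          (2 * ∑ i, (hG.1.eigenvalues i - 1) ^ 2 +
            (∑ i, (hG.1.eigenvalues i - 1)) ^ 2)) ∧
    ((2 / ((m : ℝ) * (m + 2))) * ∑ i, (hG.1.eigenvalues i - 1) ^ 2
        ≤ ∫ v, ((fun k => v k) ⬝ᵥ G.mulVec (fun k => v k) - 1) ^ 2 ∂σ) ∧
    ((∫ v, ((fun k => v k) ⬝ᵥ G.mulVec (fun k => v k) - 1) ^ 2 ∂σ) < η →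
      ∑ i, (hG.1.eigenvalues i - 1) ^ 2 < η * (m : ℝ) * (m + 2) / 2) := by
  classical
  have hmR : (1 : ℝ) ≤ (m : ℝ) := by exact_mod_cast hm
  have hm0 : (0 : ℝ) < m := by linarith
  have hD : (0 : ℝ) < (m : ℝ) * ((m : ℝ) + 2) := by positivity
  set lam : Fin m → ℝ := hG.1.eigenvalues with hlam
  set D : ℝ := (m : ℝ) * ((m : ℝ) + 2) with hDdef
  set U : Matrix (Fin m) (Fin m) ℝ := (hG.1.eigenvectorUnitary : Matrix (Fin m) (Fin m) ℝ)
    with hU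
  have hstar : star U = Uᵀ := by
    rw [Matrix.star_eq_conjTranspose, Matrix.conjTranspose_eq_transpose_of_trivial]
  have h1 : Uᵀ * U = 1 := by
    rw [← hstar]; exact Matrix.mem_unitaryGroup_iff'.mp hG.1.eigenvectorUnitary.2
  have h2 : U * Uᵀ = 1 := by
    rw [← hstar]; exact Matrix.mem_unitaryGroup_iff.mp hG.1.eigenvectorUnitary.2
  -- quadratic form in terms of eigenvalues
  have hq : ∀ v : EuclideanSpace ℝ (Fin m),
      (fun k => v k) ⬝ᵥ G.mulVec (fun k => v k) = ∑ i, lam i * (Uᵀ.mulVec v i) ^ 2 := by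
    intro v
    have hGdec : G = U * Matrix.diagonal lam * Uᵀ := by
      conv_lhs => rw [hG.1.spectral_theorem]
      rw [Unitary.conjStarAlgAut_apply, hstar, RCLike.ofReal_real_eq_id, Function.id_comp]
    conv_lhs => rw [hGdec]
    show v ⬝ᵥ (U * Matrix.diagonal lam * Uᵀ).mulVec v = _
    rw [← Matrix.mulVec_mulVec, ← Matrix.mulVec_mulVec, Matrix.dotProduct_mulVec,
      ← Matrix.mulVec_transpose]
    rw [dotProduct, Finset.sum_congr rfl
      (fun i _ => by rw [Matrix.mulVec_diagonal])]
    exact Finset.sum_congr rfl fun i _ => by ring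
  -- step 1 : reduce to diagonal case
  set A := ∫ v, ((fun k => v k) ⬝ᵥ G.mulVec (fun k => v k) - 1) ^ 2 ∂σ with hA
  have hcontf : Continuous fun v : EuclideanSpace ℝ (Fin m) =>
      ((∑ i, lam i * (v i) ^ 2) - 1) ^ 2 :=
    ((continuous_finset_sum _ fun i _ =>
      continuous_const.mul ((PiLp.continuous_apply 2 _ i).pow 2)).sub continuous_const).pow 2
  have hT1 : (Uᵀ)ᵀ * Uᵀ = 1 := by rw [Matrix.transpose_transpose]; exact h2
  have hstep1 : A = ∫ v, ((∑ i, lam i * (v i) ^ 2) - 1) ^ 2 ∂σ := by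
    rw [← SAD.key σ hinv (SAD.matIso Uᵀ hT1 h1) hcontf, hA]
    refine integral_congr_ae (Filter.Eventually.of_forall fun v => ?_)
    beta_reduce
    rw [hq v]
    rfl
  -- step 2 : expand the square
  have hpt : ∀ v : EuclideanSpace ℝ (Fin m), ((∑ i, lam i * (v i) ^ 2) - 1) ^ 2
      = (∑ i, ∑ j, (lam i * lam j) * ((v i) ^ 2 * (v j) ^ 2))
        - 2 * (∑ i, lam i * (v i) ^ 2) + 1 := by
    intro v
    have hsq : (∑ i, lam i * (v i) ^ 2) ^ 2
        = ∑ i, ∑ j, (lam i * lam j) * ((v i) ^ 2 * (v j) ^ 2) := by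
      rw [sq, Finset.sum_mul_sum]
      exact Finset.sum_congr rfl fun i _ => Finset.sum_congr rfl fun j _ => by ring
    rw [sub_sq, hsq, one_pow, mul_one]
  have Iinner : ∀ i : Fin m, Integrable
      (fun v : EuclideanSpace ℝ (Fin m) => ∑ j, (lam i * lam j) * ((v i) ^ 2 * (v j) ^ 2)) σ :=
    fun i => SAD.integ σ hsupp (continuous_finset_sum _ fun j _ =>
      continuous_const.mul (SAD.cont_mono i j 2 2))
  have Isum : Integrable (fun v : EuclideanSpace ℝ (Fin m) =>
      ∑ i, ∑ j, (lam i * lam j) * ((v i) ^ 2 * (v j) ^ 2)) σ :=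
    SAD.integ σ hsupp (continuous_finset_sum _ fun i _ => continuous_finset_sum _ fun j _ =>
      continuous_const.mul (SAD.cont_mono i j 2 2))
  have Ilin : Integrable (fun v : EuclideanSpace ℝ (Fin m) =>
      2 * (∑ i, lam i * (v i) ^ 2)) σ :=
    (SAD.integ σ hsupp (continuous_finset_sum _ fun i _ =>
      continuous_const.mul ((PiLp.continuous_apply 2 _ i).pow 2))).const_mul 2
  have hstep2 : A = (∑ i, ∑ j, (lam i * lam j) * (∫ v, (v i) ^ 2 * (v j) ^ 2 ∂σ))
      - 2 * (∑ i, lam i * (1 / (m : ℝ))) + 1 := by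
    rw [hstep1]
    calc ∫ v, ((∑ i, lam i * (v i) ^ 2) - 1) ^ 2 ∂σ
        = ∫ v, ((∑ i, ∑ j, (lam i * lam j) * ((v i) ^ 2 * (v j) ^ 2))
            - 2 * (∑ i, lam i * (v i) ^ 2) + 1) ∂σ :=
          integral_congr_ae (Filter.Eventually.of_forall fun v => hpt v)
      _ = (∫ v, ((∑ i, ∑ j, (lam i * lam j) * ((v i) ^ 2 * (v j) ^ 2))
            - 2 * (∑ i, lam i * (v i) ^ 2)) ∂σ) + ∫ _v, (1 : ℝ) ∂σ :=
          integral_add (Isum.sub Ilin) (integrable_const 1)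
      _ = (∫ v, (∑ i, ∑ j, (lam i * lam j) * ((v i) ^ 2 * (v j) ^ 2)) ∂σ)
            - (∫ v, 2 * (∑ i, lam i * (v i) ^ 2) ∂σ) + 1 := by
          rw [integral_sub Isum Ilin]; simp
      _ = (∑ i, ∑ j, (lam i * lam j) * (∫ v, (v i) ^ 2 * (v j) ^ 2 ∂σ))
            - 2 * (∑ i, lam i * (1 / (m : ℝ))) + 1 := by
          congr 1
          congr 1
          · rw [integral_finset_sum _ fun i _ => Iinner i]
            refine Finset.sum_congr rfl fun i _ => ?_
            rw [integral_finset_sum _ fun j _ => (SAD.int_mono σ hsupp hinv i j 2 2).const_mul _]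
            exact Finset.sum_congr rfl fun j _ => integral_const_mul _ _
          · rw [integral_const_mul]
            congr 1
            rw [integral_finset_sum _ fun i _ => (SAD.integ σ hsupp (f := fun v => (v i) ^ 2)
              ((PiLp.continuous_apply 2 _ i).pow 2)).const_mul (lam i)]
            refine Finset.sum_congr rfl fun i _ => ?_
            rw [integral_const_mul, SAD.M_I2 σ hsupp hinv i]
  -- step 3 : evaluate the double sum
  set S : ℝ := ∑ i, (lam i) ^ 2 with hS
  set L : ℝ := ∑ i, lam i with hL
  have hdouble : (∑ i, ∑ j, (lam i * lam j) * (∫ v, (v i) ^ 2 * (v j) ^ 2 ∂σ))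
      = S * (3 / D) + (L * L - S) * (1 / D) := by
    have hin : ∀ i : Fin m, (∑ j, (lam i * lam j) * (∫ v, (v i) ^ 2 * (v j) ^ 2 ∂σ))
        = (lam i) ^ 2 * (3 / D) + (lam i * L - (lam i) ^ 2) * (1 / D) := by
      intro i
      rw [← Finset.add_sum_erase _ _ (Finset.mem_univ i)]
      have hJii : ∫ v, (v i) ^ 2 * (v i) ^ 2 ∂σ = 3 / D := by
        have hc : ∫ v, (v i) ^ 2 * (v i) ^ 2 ∂σ = ∫ v, (v i) ^ 4 ∂σ := by
          congr 1; funext v; ring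
        rw [hc, SAD.M_Q σ hsupp hinv i, hDdef]
      have htail : ∑ j ∈ Finset.univ.erase i, (lam i * lam j) * (∫ v, (v i) ^ 2 * (v j) ^ 2 ∂σ)
          = ∑ j ∈ Finset.univ.erase i, (lam i * lam j) * (1 / D) :=
        Finset.sum_congr rfl fun j hj => by
          rw [SAD.M_offdiag σ hsupp hinv i j (Ne.symm (Finset.mem_erase.1 hj).1), hDdef]
      rw [hJii, htail, ← Finset.sum_mul, ← Finset.mul_sum,
        Finset.sum_erase_eq_sub (Finset.mem_univ i), ← hL]
      ring
    calc (∑ i, ∑ j, (lam i * lam j) * (∫ v, (v i) ^ 2 * (v j) ^ 2 ∂σ))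
        = ∑ i, ((lam i) ^ 2 * (3 / D) + (lam i * L - (lam i) ^ 2) * (1 / D)) :=
          Finset.sum_congr rfl fun i _ => hin i
      _ = S * (3 / D) + (L * L - S) * (1 / D) := by
          rw [Finset.sum_add_distrib, ← Finset.sum_mul, ← Finset.sum_mul, ← hS,
            Finset.sum_sub_distrib, ← Finset.sum_mul, ← hS, ← hL]
  have hlinsum : (∑ i, lam i * (1 / (m : ℝ))) = L * (1 / (m : ℝ)) := by
    rw [← Finset.sum_mul, ← hL]
  -- eigenvalue sum identities
  have e3 : ∑ i, (lam i - 1) ^ 2 = S - 2 * L + m := by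
    calc ∑ i, (lam i - 1) ^ 2 = ∑ i, ((lam i) ^ 2 - 2 * lam i + 1) :=
          Finset.sum_congr rfl fun i _ => by ring
      _ = S - 2 * L + m := by
          rw [Finset.sum_add_distrib, Finset.sum_sub_distrib, ← hS, ← Finset.mul_sum, ← hL]
          simp
  have e4 : ∑ i, (lam i - 1) = L - m := by
    rw [Finset.sum_sub_distrib, ← hL]
    simp
  -- put everything together
  have hAval : A = S * (3 / D) + (L * L - S) * (1 / D) - 2 * (L * (1 / (m : ℝ))) + 1 := by
    rw [hstep2, hdouble, hlinsum]
  have hmain : A = (1 / D) * (2 * (∑ i, (lam i - 1) ^ 2) + (∑ i, (lam i - 1)) ^ 2) := by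
    rw [hAval, e3, e4, hDdef]
    field_simp
    ring
  refine ⟨hmain, ?_, ?_⟩
  · rw [hmain, e3, e4]
    have hkey : (1 / D) * (2 * (S - 2 * L + (m : ℝ)) + (L - (m : ℝ)) ^ 2)
        - (2 / D) * (S - 2 * L + (m : ℝ)) = (L - (m : ℝ)) ^ 2 / D := by
      field_simp
      ring
    have hpos : (0 : ℝ) ≤ (L - (m : ℝ)) ^ 2 / D := by positivity
    linarith
  · intro hlt
    rw [hmain, e3, e4] at hlt
    have hge : (2 / D) * (S - 2 * L + (m : ℝ))
        ≤ (1 / D) * (2 * (S - 2 * L + (m : ℝ)) + (L - (m : ℝ)) ^ 2) := by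
      have hkey : (1 / D) * (2 * (S - 2 * L + (m : ℝ)) + (L - (m : ℝ)) ^ 2)
          - (2 / D) * (S - 2 * L + (m : ℝ)) = (L - (m : ℝ)) ^ 2 / D := by
        field_simp
        ring
      have hpos : (0 : ℝ) ≤ (L - (m : ℝ)) ^ 2 / D := by positivity
      linarith
    have h6 : (2 / D) * (S - 2 * L + (m : ℝ)) < η := lt_of_le_of_lt hge hlt
    rw [e3]
    rw [div_mul_eq_mul_div, div_lt_iff₀ hD] at h6
    rw [show η * (m : ℝ) * ((m : ℝ) + 2) / 2 = η * D / 2 by rw [hDdef]; ring]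
    linarith
end

section
/- Let T : M → ℝ^d be α-bi-Lipschitz (α ≥ 1) and bijective onto T(M), let μ̂ be a probability measure on M, ν a probability measure on ℝ^d, R : ℝ^d → T(M) measurable, and S : T(M) → ℝ^D measurable. Then for p ≥ 1, W_p^p(μ̂, (S∘R)_#ν) ≤ 2^{p−1}( α^p W_p^p(T_#μ̂, R_#ν) + ∫_{T(M)} ‖T⁻¹(y) − S(y)‖^p d(R_#ν)(y) ). -/
open MeasureTheory

private lemma add_rpow_aux {a b p : ℝ} (ha : 0 ≤ a) (hb : 0 ≤ b) (hp : 1 ≤ p) :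
    (a + b) ^ p ≤ 2 ^ (p - 1) * (a ^ p + b ^ p) := by
  have h := NNReal.rpow_add_le_mul_rpow_add_rpow (⟨a, ha⟩ : NNReal) ⟨b, hb⟩ hp
  have h2 := NNReal.coe_le_coe.2 h
  push_cast at h2
  convert h2 using 2 <;> rfl

/-- The `p`-th power of the Wasserstein-`p` distance, as an infimum over
couplings (in `ℝ≥0∞`). -/
noncomputable def wassersteinPow {X : Type*} [MeasurableSpace X] [PseudoMetricSpace X]
    (p : ℝ) (μ ν : Measure X) : ENNReal :=
  ⨅ γ ∈ {γ : Measure (X × X) | γ.map Prod.fst = μ ∧ γ.map Prod.snd = ν},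
    ∫⁻ q, ENNReal.ofReal (dist q.1 q.2 ^ p) ∂γ

/-- Wasserstein bound for latent generative models with an `α`-bi-Lipschitz
encoder: `W_p^p(μ̂, (S∘R)_#ν) ≤ 2^{p−1}(α^p W_p^p(T_#μ̂, R_#ν)
+ ∫ ‖T⁻¹(y) − S(y)‖^p d(R_#ν))`. -/
theorem wasserstein_bound_biLipschitz_encoder
    {D d : ℕ} (α : ℝ) (hα : 1 ≤ α) (p : ℝ) (hp : 1 ≤ p)
    (Ms : Set (EuclideanSpace ℝ (Fin D)))
    (T : Ms → EuclideanSpace ℝ (Fin d))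
    (Tinv : EuclideanSpace ℝ (Fin d) → Ms)
    (hTinv : ∀ x, Tinv (T x) = x)
    (hbiLip : ∀ x x' : Ms,
      (1 / α) * ‖(x : EuclideanSpace ℝ (Fin D)) - (x' : EuclideanSpace ℝ (Fin D))‖
          ≤ ‖T x - T x'‖ ∧
      ‖T x - T x'‖
          ≤ α * ‖(x : EuclideanSpace ℝ (Fin D)) - (x' : EuclideanSpace ℝ (Fin D))‖)
    (hTmeas : Measurable T) (hTinvmeas : Measurable Tinv)
    (μhat : Measure Ms) [IsProbabilityMeasure μhat]
    (ν : Measure (EuclideanSpace ℝ (Fin d))) [IsProbabilityMeasure ν]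
    (R : EuclideanSpace ℝ (Fin d) → EuclideanSpace ℝ (Fin d))
    (hR : Measurable R) (hRrange : ∀ z, ∃ x : Ms, T x = R z)
    (S : EuclideanSpace ℝ (Fin d) → EuclideanSpace ℝ (Fin D))
    (hS : Measurable S) :
    wassersteinPow p (μhat.map ((↑) : Ms → EuclideanSpace ℝ (Fin D)))
        (ν.map (S ∘ R))
      ≤ ENNReal.ofReal (2 ^ (p - 1)) *
        (ENNReal.ofReal (α ^ p) *
            wassersteinPow p (μhat.map T) (ν.map R) +
          ∫⁻ y, ENNReal.ofReal
            (‖(Tinv y : EuclideanSpace ℝ (Fin D)) - S y‖ ^ p) ∂(ν.map R)) := by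
  classical
  have hα0 : (0 : ℝ) < α := lt_of_lt_of_le one_pos hα
  set C2 : ENNReal := ENNReal.ofReal (2 ^ (p - 1)) with hC2def
  set A : ENNReal := ENNReal.ofReal (α ^ p) with hAdef
  set B : ENNReal :=
    ∫⁻ y, ENNReal.ofReal (‖(Tinv y : (EuclideanSpace ℝ (Fin D))) - S y‖ ^ p) ∂(ν.map R) with hBdef
  -- the good set where T ∘ Tinv = id
  set G : Set (EuclideanSpace ℝ (Fin d)) := {x | T (Tinv x) = x} with hGdef
  have hGmeas : MeasurableSet G :=
    measurableSet_eq_fun (hTmeas.comp hTinvmeas) measurable_id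
  have hTG : ∀ x : Ms, T x ∈ G := fun x => by simp [hGdef, hTinv x]
  have hcoeTinv : Measurable fun y : (EuclideanSpace ℝ (Fin d)) => ((Tinv y : (EuclideanSpace ℝ (Fin D)))) :=
    measurable_subtype_coe.comp hTinvmeas
  have hcmeas : Measurable fun y : (EuclideanSpace ℝ (Fin d)) => ENNReal.ofReal (‖(Tinv y : (EuclideanSpace ℝ (Fin D))) - S y‖ ^ p) :=
    ENNReal.measurable_ofReal.comp (((hcoeTinv.sub hS).norm).pow_const p)
  have hdmeas : Measurable fun q : (EuclideanSpace ℝ (Fin d)) × (EuclideanSpace ℝ (Fin d)) => ENNReal.ofReal (dist q.1 q.2 ^ p) :=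
    ENNReal.measurable_ofReal.comp ((measurable_fst.dist measurable_snd).pow_const p)
  have hdmeasF : Measurable fun q : (EuclideanSpace ℝ (Fin D)) × (EuclideanSpace ℝ (Fin D)) => ENNReal.ofReal (dist q.1 q.2 ^ p) :=
    ENNReal.measurable_ofReal.comp ((measurable_fst.dist measurable_snd).pow_const p)
  -- key estimate for each coupling
  have key : ∀ γ : Measure ((EuclideanSpace ℝ (Fin d)) × (EuclideanSpace ℝ (Fin d))), γ.map Prod.fst = μhat.map T →
      γ.map Prod.snd = ν.map R →
      wassersteinPow p (μhat.map ((↑) : Ms → (EuclideanSpace ℝ (Fin D)))) (ν.map (S ∘ R))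
        ≤ C2 * (A * ∫⁻ q, ENNReal.ofReal (dist q.1 q.2 ^ p) ∂γ + B) := by
    intro γ hγ1 hγ2
    set f : (EuclideanSpace ℝ (Fin d)) × (EuclideanSpace ℝ (Fin d)) → (EuclideanSpace ℝ (Fin D)) × (EuclideanSpace ℝ (Fin D)) := fun q => (((Tinv q.1 : (EuclideanSpace ℝ (Fin D)))), S q.2) with hfdef
    have hf : Measurable f := (hcoeTinv.comp measurable_fst).prodMk (hS.comp measurable_snd)
    have h1 : (γ.map f).map Prod.fst = μhat.map ((↑) : Ms → (EuclideanSpace ℝ (Fin D))) := by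
      rw [Measure.map_map measurable_fst hf]
      have : (Prod.fst ∘ f) = (((↑) : Ms → (EuclideanSpace ℝ (Fin D))) ∘ Tinv) ∘ Prod.fst := rfl
      rw [this, ← Measure.map_map (measurable_subtype_coe.comp hTinvmeas) measurable_fst,
        hγ1, Measure.map_map (measurable_subtype_coe.comp hTinvmeas) hTmeas]
      congr 1
      funext x
      simp [Function.comp, hTinv x]
    have h2 : (γ.map f).map Prod.snd = ν.map (S ∘ R) := by
      rw [Measure.map_map measurable_snd hf]
      have : (Prod.snd ∘ f) = S ∘ Prod.snd := rfl
      rw [this, ← Measure.map_map hS measurable_snd, hγ2, Measure.map_map hS hR]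
    have hle : wassersteinPow p (μhat.map ((↑) : Ms → (EuclideanSpace ℝ (Fin D)))) (ν.map (S ∘ R))
        ≤ ∫⁻ q, ENNReal.ofReal (dist q.1 q.2 ^ p) ∂(γ.map f) := by
      refine iInf_le_of_le (γ.map f) ?_
      exact iInf_le_of_le ⟨h1, h2⟩ le_rfl
    have hcost : ∫⁻ q, ENNReal.ofReal (dist q.1 q.2 ^ p) ∂(γ.map f)
        = ∫⁻ q, ENNReal.ofReal (dist ((Tinv q.1 : (EuclideanSpace ℝ (Fin D)))) (S q.2) ^ p) ∂γ :=
      lintegral_map hdmeasF hf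
    -- a.e. membership in G
    have hG1 : ∀ᵐ q ∂γ, q.1 ∈ G := by
      rw [ae_iff]
      have : {q : (EuclideanSpace ℝ (Fin d)) × (EuclideanSpace ℝ (Fin d)) | ¬ q.1 ∈ G} = Prod.fst ⁻¹' Gᶜ := rfl
      rw [this, ← Measure.map_apply measurable_fst hGmeas.compl, hγ1,
        Measure.map_apply hTmeas hGmeas.compl]
      have : T ⁻¹' Gᶜ = ∅ := by
        ext x; simp [hTG x]
      simp [this]
    have hG2 : ∀ᵐ q ∂γ, q.2 ∈ G := by
      rw [ae_iff]
      have : {q : (EuclideanSpace ℝ (Fin d)) × (EuclideanSpace ℝ (Fin d)) | ¬ q.2 ∈ G} = Prod.snd ⁻¹' Gᶜ := rfl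
      rw [this, ← Measure.map_apply measurable_snd hGmeas.compl, hγ2,
        Measure.map_apply hR hGmeas.compl]
      have : R ⁻¹' Gᶜ = ∅ := by
        ext z
        obtain ⟨x, hx⟩ := hRrange z
        simp [← hx, hTG x]
      simp [this]
    -- pointwise bound
    have hpt : ∀ᵐ q ∂γ, ENNReal.ofReal (dist ((Tinv q.1 : (EuclideanSpace ℝ (Fin D)))) (S q.2) ^ p)
        ≤ C2 * (A * ENNReal.ofReal (dist q.1 q.2 ^ p)
            + ENNReal.ofReal (‖(Tinv q.2 : (EuclideanSpace ℝ (Fin D))) - S q.2‖ ^ p)) := by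
      filter_upwards [hG1, hG2] with q hq1 hq2
      set c : ℝ := ‖(Tinv q.2 : (EuclideanSpace ℝ (Fin D))) - S q.2‖ with hcdef
      have hc0 : 0 ≤ c := norm_nonneg _
      have hd0 : (0 : ℝ) ≤ dist q.1 q.2 := dist_nonneg
      have htri : dist ((Tinv q.1 : (EuclideanSpace ℝ (Fin D)))) (S q.2) ≤ α * dist q.1 q.2 + c := by
        have t1 : dist ((Tinv q.1 : (EuclideanSpace ℝ (Fin D)))) (S q.2)
            ≤ dist ((Tinv q.1 : (EuclideanSpace ℝ (Fin D)))) ((Tinv q.2 : (EuclideanSpace ℝ (Fin D)))) + dist ((Tinv q.2 : (EuclideanSpace ℝ (Fin D)))) (S q.2) :=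
          dist_triangle _ _ _
        have t2 : dist ((Tinv q.1 : (EuclideanSpace ℝ (Fin D)))) ((Tinv q.2 : (EuclideanSpace ℝ (Fin D)))) ≤ α * dist q.1 q.2 := by
          have hb := (hbiLip (Tinv q.1) (Tinv q.2)).1
          rw [hq1, hq2] at hb
          have : ‖(Tinv q.1 : (EuclideanSpace ℝ (Fin D))) - (Tinv q.2 : (EuclideanSpace ℝ (Fin D)))‖ ≤ α * ‖q.1 - q.2‖ := by
            have := mul_le_mul_of_nonneg_left hb (le_of_lt hα0)
            rwa [← mul_assoc, mul_one_div, div_self (ne_of_gt hα0), one_mul] at this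
          rwa [dist_eq_norm, dist_eq_norm]
        have t3 : dist ((Tinv q.2 : (EuclideanSpace ℝ (Fin D)))) (S q.2) = c := dist_eq_norm _ _
        linarith
      have hineq : dist ((Tinv q.1 : (EuclideanSpace ℝ (Fin D)))) (S q.2) ^ p
          ≤ 2 ^ (p - 1) * (α ^ p * dist q.1 q.2 ^ p + c ^ p) := by
        have e1 : dist ((Tinv q.1 : (EuclideanSpace ℝ (Fin D)))) (S q.2) ^ p ≤ (α * dist q.1 q.2 + c) ^ p :=
          Real.rpow_le_rpow dist_nonneg htri (le_trans zero_le_one hp)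
        have e2 : (α * dist q.1 q.2 + c) ^ p
            ≤ 2 ^ (p - 1) * ((α * dist q.1 q.2) ^ p + c ^ p) :=
          add_rpow_aux (mul_nonneg (le_of_lt hα0) hd0) hc0 hp
        have e3 : (α * dist q.1 q.2) ^ p = α ^ p * dist q.1 q.2 ^ p :=
          Real.mul_rpow (le_of_lt hα0) hd0
        rw [e3] at e2
        linarith
      calc ENNReal.ofReal (dist ((Tinv q.1 : (EuclideanSpace ℝ (Fin D)))) (S q.2) ^ p)
          ≤ ENNReal.ofReal (2 ^ (p - 1) * (α ^ p * dist q.1 q.2 ^ p + c ^ p)) :=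
            ENNReal.ofReal_le_ofReal hineq
        _ = C2 * (A * ENNReal.ofReal (dist q.1 q.2 ^ p) + ENNReal.ofReal (c ^ p)) := by
            rw [ENNReal.ofReal_mul (by positivity), ENNReal.ofReal_add (by positivity) (by positivity),
              ENNReal.ofReal_mul (by positivity)]
    -- integrate the pointwise bound
    have hint : ∫⁻ q, ENNReal.ofReal (dist ((Tinv q.1 : (EuclideanSpace ℝ (Fin D)))) (S q.2) ^ p) ∂γ
        ≤ C2 * (A * ∫⁻ q, ENNReal.ofReal (dist q.1 q.2 ^ p) ∂γ + B) := by
      calc ∫⁻ q, ENNReal.ofReal (dist ((Tinv q.1 : (EuclideanSpace ℝ (Fin D)))) (S q.2) ^ p) ∂γ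
          ≤ ∫⁻ q, C2 * (A * ENNReal.ofReal (dist q.1 q.2 ^ p)
              + ENNReal.ofReal (‖(Tinv q.2 : (EuclideanSpace ℝ (Fin D))) - S q.2‖ ^ p)) ∂γ :=
            lintegral_mono_ae hpt
        _ = C2 * (A * ∫⁻ q, ENNReal.ofReal (dist q.1 q.2 ^ p) ∂γ
              + ∫⁻ q, ENNReal.ofReal (‖(Tinv q.2 : (EuclideanSpace ℝ (Fin D))) - S q.2‖ ^ p) ∂γ) := by
            have hcsnd : Measurable fun q : (EuclideanSpace ℝ (Fin d)) × (EuclideanSpace ℝ (Fin d)) =>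
                ENNReal.ofReal (‖((Tinv q.2 : (EuclideanSpace ℝ (Fin D)))) - S q.2‖ ^ p) :=
              hcmeas.comp measurable_snd
            rw [lintegral_const_mul _ (show Measurable fun q : (EuclideanSpace ℝ (Fin d)) × (EuclideanSpace ℝ (Fin d)) => A * ENNReal.ofReal (dist q.1 q.2 ^ p) + ENNReal.ofReal (‖((Tinv q.2 : (EuclideanSpace ℝ (Fin D)))) - S q.2‖ ^ p) from (hdmeas.const_mul A).add hcsnd),
              lintegral_add_left (hdmeas.const_mul A), lintegral_const_mul _ hdmeas]
        _ = C2 * (A * ∫⁻ q, ENNReal.ofReal (dist q.1 q.2 ^ p) ∂γ + B) := by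
            rw [hBdef, ← hγ2, lintegral_map hcmeas measurable_snd]
    calc wassersteinPow p (μhat.map ((↑) : Ms → (EuclideanSpace ℝ (Fin D)))) (ν.map (S ∘ R))
        ≤ ∫⁻ q, ENNReal.ofReal (dist q.1 q.2 ^ p) ∂(γ.map f) := hle
      _ = ∫⁻ q, ENNReal.ofReal (dist ((Tinv q.1 : (EuclideanSpace ℝ (Fin D)))) (S q.2) ^ p) ∂γ := hcost
      _ ≤ C2 * (A * ∫⁻ q, ENNReal.ofReal (dist q.1 q.2 ^ p) ∂γ + B) := hint
  -- assemble
  have hA0 : A ≠ 0 := by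
    simp only [hAdef, ne_eq, ENNReal.ofReal_eq_zero, not_le]
    positivity
  have hAtop : A ≠ ⊤ := ENNReal.ofReal_ne_top
  have hC0 : C2 ≠ 0 := by
    simp only [hC2def, ne_eq, ENNReal.ofReal_eq_zero, not_le]
    positivity
  have hCtop : C2 ≠ ⊤ := ENNReal.ofReal_ne_top
  calc wassersteinPow p (μhat.map ((↑) : Ms → (EuclideanSpace ℝ (Fin D)))) (ν.map (S ∘ R))
      ≤ ⨅ γ ∈ {γ : Measure ((EuclideanSpace ℝ (Fin d)) × (EuclideanSpace ℝ (Fin d))) | γ.map Prod.fst = μhat.map T ∧ γ.map Prod.snd = ν.map R},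
          C2 * (A * ∫⁻ q, ENNReal.ofReal (dist q.1 q.2 ^ p) ∂γ + B) :=
        le_iInf₂ fun γ hγ => key γ hγ.1 hγ.2
    _ = C2 * (A * wassersteinPow p (μhat.map T) (ν.map R) + B) := by
        rw [wassersteinPow, iInf_subtype', iInf_subtype',
          ENNReal.mul_iInf_of_ne hA0 hAtop, ENNReal.iInf_add,
          ENNReal.mul_iInf_of_ne hC0 hCtop]
end
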